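/- arXiv:1802.05024 — 2 statements merged into one kernel-verified Lean document; each statement's English description precedes it below -/
import Mathlib

section
/- Let Γ be a finite-index subgroup of SL(2,ℤ). Suppose there exist matrices C₁, C₂ ∈ SL(2,ℤ) and natural numbers m₁, m₁', m₂, m₂' such that C₁T^{m₁}C₁⁻¹ ∈ Γ, C₁T'^{m₁'}C₁⁻¹ ∈ Γ, C₂T^{m₂}C₂⁻¹ ∈ Γ, C₂T'^{m₂'}C₂⁻¹ ∈ Γ, and gcd(m₁·m₁', m₂·m₂') = 1. Then for every n ≥ 1 the canonical projection SL(2,ℤ) → SL(2,ℤ/nℤ) maps Γ onto all of SL(2,ℤ/nℤ), i.e. Γ is a totally non congruence group. -/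
/-!
Let `H` be the image of `Γ` in `SL(2, ℤ/n)`, `a = m₁m₁'`, `b = m₂m₂'`. Since `SL(2, ℤ/m)` is
generated by its elementary matrices (Euclid's algorithm on the first column), `H` contains a
conjugate of a subgroup that surjects onto `SL(2, ℤ/m)` for every `m` prime to `a`, and likewise
for `b`. Split `n = d e` with `d ∣ a^k` and `e` prime to `a`. Reduction mod `d` maps `H` onto
`SL(2, ℤ/d)`, because `d` is prime to `b`. The subgroup generated by `T^{a^{k+1}}` and
`T'^{a^{k+1}}` lies in the kernel of reduction mod `d` and surjects mod `e`, so by the Chinese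
remainder theorem it contains that kernel; the kernel is normal, hence lies in `H` as well, and
`H` is everything.
-/

open Matrix MatrixGroups

def Tmat : Matrix.SpecialLinearGroup (Fin 2) ℤ :=
  ⟨!![1, 1; 0, 1], by norm_num [Matrix.det_fin_two_of]⟩

def Tmat' : Matrix.SpecialLinearGroup (Fin 2) ℤ :=
  ⟨!![1, 0; 1, 1], by norm_num [Matrix.det_fin_two_of]⟩

theorem Nat.exists_mul_eq_dvd_pow_coprime (a : ℕ) {N : ℕ} (hN : N ≠ 0) :
    ∃ d e k : ℕ, d * e = N ∧ d ∣ a ^ k ∧ e.Coprime a := by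
  have hdN : N.gcd (a ^ N) ∣ N := N.gcd_dvd_left _
  refine ⟨N.gcd (a ^ N), N / N.gcd (a ^ N), N, Nat.mul_div_cancel' hdN, N.gcd_dvd_right _,
    Nat.coprime_of_dvd fun p hp hpe hpa => ?_⟩
  -- `v_p(N) < N`, so `p ^ v_p(N)` divides `a ^ N` and hence the gcd
  have hpd : p ^ N.factorization p ∣ N.gcd (a ^ N) :=
    Nat.dvd_gcd (N.ordProj_dvd p)
      ((pow_dvd_pow p (Nat.factorization_lt p hN).le).trans (pow_dvd_pow_of_dvd hpa N))
  have hpN := mul_dvd_mul hpe hpd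
  rw [← pow_succ', Nat.div_mul_cancel hdN] at hpN
  exact N.pow_succ_factorization_not_dvd hN hp hpN

namespace Subgroup

variable {G A B : Type*} [Group G] [Group A] [Group B]

theorem Normal.le_of_le_closure_of_conj_mem {K H : Subgroup G} (hK : K.Normal) {s : Set G}
    (hKs : K ≤ closure s) {g : G} (hs : ∀ x ∈ s, g * x * g⁻¹ ∈ H) : K ≤ H := by
  have hcl : closure s ≤ H.comap (MulAut.conj g).toMonoidHom :=
    (closure_le _).2 fun x hx => by simpa using hs x hx
  intro x hx
  simpa [mul_assoc] using hcl (hKs (hK.conj_mem x hx g⁻¹))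

theorem ker_le_of_map_eq_top {f : G →* A} {g : G →* B} (hfg : Function.Injective (f.prod g))
    {L : Subgroup G} (hLf : L ≤ f.ker) (hLg : L.map g = ⊤) : f.ker ≤ L := by
  intro x hx
  obtain ⟨z, hz, hzx⟩ := hLg.ge (mem_top (g x))
  have hfz : f z = f x := by rw [(hLf hz : f z = 1), (hx : f x = 1)]
  exact hfg (Prod.ext hfz hzx) ▸ hz

theorem eq_top_of_ker_le_of_map_eq_top {H : Subgroup G} {f : G →* A} (hker : f.ker ≤ H)
    (hmap : H.map f = ⊤) : H = ⊤ := by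
  rw [← sup_eq_left.2 hker, ← comap_map_eq, hmap, comap_top]

theorem conj_pow_mul_mem_map (f : G →* A) {Γ : Subgroup G} {C x : G} {p : ℕ}
    (h : C * x ^ p * C⁻¹ ∈ Γ) (q : ℕ) : f C * f x ^ (p * q) * (f C)⁻¹ ∈ Γ.map f := by
  simpa [conj_pow, pow_mul] using mem_map_of_mem f (pow_mem h q)

end Subgroup

theorem Matrix.SpecialLinearGroup.injective_map_prod_map {n R A B : Type*} [Fintype n]
    [DecidableEq n] [CommRing R] [CommRing A] [CommRing B] {f : R →+* A} {g : R →+* B}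
    (hfg : Function.Injective (f.prod g)) :
    Function.Injective ((map (n := n) f).prod (map g)) := by
  intro x y h
  simp only [MonoidHom.prod_apply, Prod.mk.injEq] at h
  ext i j
  apply hfg
  simpa using And.intro (congrArg (fun z => z i j) h.1) (congrArg (fun z => z i j) h.2)

theorem ZMod.injective_castHom_prod_castHom {d e : ℕ} (hde : d.Coprime e) :
    Function.Injective ((castHom (dvd_mul_right d e) (ZMod d)).prod
      (castHom (dvd_mul_left e d) (ZMod e))) := by
  rw [Subsingleton.elim ((castHom _ _).prod (castHom _ _))
    (chineseRemainder hde : ZMod (d * e) →+* ZMod d × ZMod e)]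
  exact (chineseRemainder hde).injective

namespace SL2

section CommRing

variable {R : Type*} [CommRing R]

def upper (x : R) : SL(2, R) :=
  ⟨!![1, x; 0, 1], by simp [det_fin_two_of]⟩

def lower (x : R) : SL(2, R) :=
  ⟨!![1, 0; x, 1], by simp [det_fin_two_of]⟩

def S : SL(2, R) :=
  ⟨!![0, -1; 1, 0], by simp [det_fin_two_of]⟩

@[simp]
theorem coe_upper (x : R) : (upper x : Matrix (Fin 2) (Fin 2) R) = !![1, x; 0, 1] := rfl

@[simp]
theorem coe_lower (x : R) : (lower x : Matrix (Fin 2) (Fin 2) R) = !![1, 0; x, 1] := rfl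

@[simp]
theorem coe_S : ((S : SL(2, R)) : Matrix (Fin 2) (Fin 2) R) = !![0, -1; 1, 0] := rfl

theorem upper_add (x y : R) : upper (x + y) = upper x * upper y := by
  ext i j; fin_cases i <;> fin_cases j <;> simp [add_comm]

theorem lower_add (x y : R) : lower (x + y) = lower x * lower y := by
  ext i j; fin_cases i <;> fin_cases j <;> simp

theorem upper_zero : upper (0 : R) = 1 := by
  ext i j; fin_cases i <;> fin_cases j <;> simp

theorem lower_zero : lower (0 : R) = 1 := by
  ext i j; fin_cases i <;> fin_cases j <;> simp

theorem upper_pow (x : R) (k : ℕ) : upper x ^ k = upper (k * x) := by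
  induction k with
  | zero => simp [upper_zero]
  | succ k ih => rw [pow_succ, ih, ← upper_add]; push_cast; ring_nf

theorem lower_pow (x : R) (k : ℕ) : lower x ^ k = lower (k * x) := by
  induction k with
  | zero => simp [lower_zero]
  | succ k ih => rw [pow_succ, ih, ← lower_add]; push_cast; ring_nf

theorem map_upper {A : Type*} [CommRing A] (f : R →+* A) (x : R) :
    SpecialLinearGroup.map f (upper x) = upper (f x) := by
  ext i j; fin_cases i <;> fin_cases j <;> simp

theorem map_lower {A : Type*} [CommRing A] (f : R →+* A) (x : R) :
    SpecialLinearGroup.map f (lower x) = lower (f x) := by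
  ext i j; fin_cases i <;> fin_cases j <;> simp

theorem S_eq : (S : SL(2, R)) = upper (-1) * lower 1 * upper (-1) := by
  ext i j; fin_cases i <;> fin_cases j <;> simp

theorem S_mul_upper_mul_apply_one_zero (x : R) (g : SL(2, R)) :
    (S * upper x * g : SL(2, R)) 1 0 = g 0 0 + x * g 1 0 := by
  simp [Matrix.mul_apply, Fin.sum_univ_two]

theorem eq_of_apply_one_zero_eq_zero {g : SL(2, R)} (hg : g 1 0 = 0) :
    g = upper (g 0 0) * lower (-g 1 1) * upper (g 0 0) * S * upper (g 1 1 * g 0 1) := by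
  have hdet := g.det_coe
  rw [det_fin_two, hg, mul_zero, sub_zero] at hdet
  ext i j; fin_cases i <;> fin_cases j <;> simp [hg]
  · linear_combination (-(g 0 0)) * hdet
  · linear_combination (g 0 0 * g 1 1 * g 0 1 - g 0 1 - 1) * hdet
  · linear_combination hdet
  · linear_combination (-(g 1 1 * g 0 1)) * hdet

variable (R) in
def elementary : Subgroup SL(2, R) :=
  Subgroup.closure (Set.range upper ∪ Set.range lower)

theorem upper_mem_elementary (x : R) : upper x ∈ elementary R :=
  Subgroup.subset_closure (Or.inl ⟨x, rfl⟩)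

theorem lower_mem_elementary (x : R) : lower x ∈ elementary R :=
  Subgroup.subset_closure (Or.inr ⟨x, rfl⟩)

theorem S_mem_elementary : S ∈ elementary R := by
  rw [S_eq]
  exact mul_mem (mul_mem (upper_mem_elementary _) (lower_mem_elementary _))
    (upper_mem_elementary _)

theorem mem_elementary_of_apply_one_zero_eq_zero {g : SL(2, R)} (hg : g 1 0 = 0) :
    g ∈ elementary R := by
  rw [eq_of_apply_one_zero_eq_zero hg]
  refine mul_mem (mul_mem (mul_mem (mul_mem ?_ ?_) ?_) S_mem_elementary) ?_ <;>
    first | exact upper_mem_elementary _ | exact lower_mem_elementary _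

end CommRing

section ZMod

variable {m : ℕ} [NeZero m]

/-- One step of the Euclidean algorithm on the first column. -/
theorem exists_mem_elementary_val_lt (g : SL(2, ZMod m)) (hg : g 1 0 ≠ 0) :
    ∃ w ∈ elementary (ZMod m), ((w * g) 1 0).val < (g 1 0).val := by
  set q := (g 0 0).val / (g 1 0).val
  set r := (g 0 0).val % (g 1 0).val
  have hr : r < (g 1 0).val := Nat.mod_lt _ (ZMod.val_pos.2 hg)
  refine ⟨S * upper (-(q : ZMod m)), mul_mem S_mem_elementary (upper_mem_elementary _), ?_⟩
  have hentry : (S * upper (-(q : ZMod m)) * g : SL(2, ZMod m)) 1 0 = r := by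
    have hdiv : ((((g 1 0).val * q + r : ℕ)) : ZMod m) = g 0 0 := by
      rw [Nat.div_add_mod, ZMod.natCast_zmod_val]
    push_cast [ZMod.natCast_zmod_val] at hdiv
    rw [S_mul_upper_mul_apply_one_zero]
    linear_combination -hdiv
  rwa [hentry, ZMod.val_natCast_of_lt (hr.trans (ZMod.val_lt _))]

theorem elementary_eq_top : elementary (ZMod m) = ⊤ := by
  refine (Subgroup.eq_top_iff' _).2 fun g => ?_
  induction hk : (g 1 0).val using Nat.strong_induction_on generalizing g with
  | _ k ih =>
    by_cases hg : g 1 0 = 0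
    · exact mem_elementary_of_apply_one_zero_eq_zero hg
    · obtain ⟨w, hw, hlt⟩ := exists_mem_elementary_val_lt g hg
      simpa using mul_mem (inv_mem hw) (ih _ (hk ▸ hlt) (w * g) rfl)

theorem closure_upper_pow_lower_pow_eq_top {c : ℕ} (hc : c.Coprime m) :
    Subgroup.closure {upper 1 ^ c, lower (1 : ZMod m) ^ c} = ⊤ := by
  -- every `x` is `c * (x / c)`, so `upper x` and `lower x` are powers of the generators
  have hx (x : ZMod m) : ((c * (x * (c : ZMod m)⁻¹).val : ℕ) : ZMod m) = x := by
    rw [Nat.cast_mul, ZMod.natCast_zmod_val, mul_left_comm, ZMod.coe_mul_inv_eq_one c hc,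
      mul_one]
  rw [eq_top_iff, ← elementary_eq_top, elementary, Subgroup.closure_le]
  rintro _ (⟨x, rfl⟩ | ⟨x, rfl⟩)
  · have hpow : upper x = (upper 1 ^ c) ^ (x * (c : ZMod m)⁻¹).val := by
      rw [← pow_mul, upper_pow, mul_one, hx]
    rw [hpow]
    exact pow_mem (Subgroup.subset_closure (Set.mem_insert _ _)) _
  · have hpow : lower x = (lower 1 ^ c) ^ (x * (c : ZMod m)⁻¹).val := by
      rw [← pow_mul, lower_pow, mul_one, hx]
    rw [hpow]
    exact pow_mem (Subgroup.subset_closure (Set.mem_insert_of_mem _ (Set.mem_singleton _))) _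

theorem eq_top_of_conj_mem {H : Subgroup SL(2, ZMod m)} {g : SL(2, ZMod m)} {c : ℕ}
    (hc : c.Coprime m) (hu : g * upper 1 ^ c * g⁻¹ ∈ H) (hl : g * lower 1 ^ c * g⁻¹ ∈ H) :
    H = ⊤ :=
  top_le_iff.1 <| Subgroup.normal_top.le_of_le_closure_of_conj_mem
    (closure_upper_pow_lower_pow_eq_top hc).ge (by rintro _ (rfl | rfl); exacts [hu, hl])

end ZMod

theorem ker_map_castHom_le_of_conj_mem {d e : ℕ} [NeZero e] (hde : d.Coprime e)
    {H : Subgroup SL(2, ZMod (d * e))} {g : SL(2, ZMod (d * e))} {c : ℕ} (hdc : d ∣ c)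
    (hce : c.Coprime e) (hu : g * upper 1 ^ c * g⁻¹ ∈ H) (hl : g * lower 1 ^ c * g⁻¹ ∈ H) :
    (SpecialLinearGroup.map (ZMod.castHom (dvd_mul_right d e) (ZMod d))).ker ≤ H := by
  set L := Subgroup.closure {upper (1 : ZMod (d * e)) ^ c, lower 1 ^ c}
  have hc : (c : ZMod d) = 0 := (ZMod.natCast_eq_zero_iff c d).2 hdc
  have hLker : L ≤ (SpecialLinearGroup.map (ZMod.castHom (dvd_mul_right d e) (ZMod d))).ker := by
    rw [Subgroup.closure_le]
    rintro _ (rfl | rfl) <;>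
      simp [map_upper, map_lower, upper_pow, lower_pow, hc, upper_zero, lower_zero]
  have hLmap : L.map (SpecialLinearGroup.map (ZMod.castHom (dvd_mul_left e d) (ZMod e))) = ⊤ := by
    rw [MonoidHom.map_closure, Set.image_pair, map_pow, map_pow, map_upper, map_lower, map_one]
    exact closure_upper_pow_lower_pow_eq_top hce
  refine (MonoidHom.normal_ker _).le_of_le_closure_of_conj_mem
    (Subgroup.ker_le_of_map_eq_top ?_ hLker hLmap) (by rintro _ (rfl | rfl); exacts [hu, hl])
  exact SpecialLinearGroup.injective_map_prod_map (ZMod.injective_castHom_prod_castHom hde)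

theorem eq_top_of_conj_mem_of_coprime {N : ℕ} [NeZero N] {H : Subgroup SL(2, ZMod N)}
    {g₁ g₂ : SL(2, ZMod N)} {a b : ℕ} (hab : a.Coprime b)
    (h₁ : g₁ * upper 1 ^ a * g₁⁻¹ ∈ H) (h₁' : g₁ * lower 1 ^ a * g₁⁻¹ ∈ H)
    (h₂ : g₂ * upper 1 ^ b * g₂⁻¹ ∈ H) (h₂' : g₂ * lower 1 ^ b * g₂⁻¹ ∈ H) : H = ⊤ := by
  obtain ⟨d, e, k, rfl, hdk, hea⟩ := Nat.exists_mul_eq_dvd_pow_coprime a (NeZero.ne N)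
  have : NeZero d := ⟨left_ne_zero_of_mul (NeZero.ne (d * e))⟩
  have : NeZero e := ⟨right_ne_zero_of_mul (NeZero.ne (d * e))⟩
  have hde : d.Coprime e := (hea.symm.pow_left k).coprime_dvd_left hdk
  have hbd : b.Coprime d := (hab.symm.pow_right k).coprime_dvd_right hdk
  have hpow (x : SL(2, ZMod (d * e))) (hx : g₁ * x ^ a * g₁⁻¹ ∈ H) :
      g₁ * x ^ (a * a ^ k) * g₁⁻¹ ∈ H := by
    simpa only [conj_pow, ← pow_mul] using pow_mem hx (a ^ k)
  have hae : (a * a ^ k).Coprime e := by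
    rw [← pow_succ']
    exact hea.symm.pow_left _
  let πd := SpecialLinearGroup.map (n := Fin 2) (ZMod.castHom (dvd_mul_right d e) (ZMod d))
  refine Subgroup.eq_top_of_ker_le_of_map_eq_top (f := πd)
    (ker_map_castHom_le_of_conj_mem hde (dvd_mul_of_dvd_right hdk a) hae (hpow _ h₁) (hpow _ h₁'))
    (eq_top_of_conj_mem (g := πd g₂) hbd ?_ ?_)
  · simpa [πd, map_upper] using Subgroup.mem_map_of_mem πd h₂
  · simpa [πd, map_lower] using Subgroup.mem_map_of_mem πd h₂'

end SL2

open SL2 in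
theorem totally_noncongruence_of_gcd_one_general
    (Γ : Subgroup (Matrix.SpecialLinearGroup (Fin 2) ℤ))
    (C₁ C₂ : Matrix.SpecialLinearGroup (Fin 2) ℤ) (m₁ m₁' m₂ m₂' : ℕ)
    (h₁ : C₁ * Tmat ^ m₁ * C₁⁻¹ ∈ Γ) (h₁' : C₁ * Tmat' ^ m₁' * C₁⁻¹ ∈ Γ)
    (h₂ : C₂ * Tmat ^ m₂ * C₂⁻¹ ∈ Γ) (h₂' : C₂ * Tmat' ^ m₂' * C₂⁻¹ ∈ Γ)
    (hgcd : Nat.gcd (m₁ * m₁') (m₂ * m₂') = 1) :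
    ∀ n : ℕ, 1 ≤ n →
      Subgroup.map (Matrix.SpecialLinearGroup.map (Int.castRingHom (ZMod n))) Γ = ⊤ := by
  intro n hn
  have : NeZero n := ⟨by omega⟩
  let φ := SpecialLinearGroup.map (n := Fin 2) (Int.castRingHom (ZMod n))
  have hT : φ Tmat = upper 1 := by
    rw [show Tmat = upper 1 from rfl, map_upper, map_one]
  have hT' : φ Tmat' = lower 1 := by
    rw [show Tmat' = lower 1 from rfl, map_lower, map_one]
  have k₁ := Γ.conj_pow_mul_mem_map φ h₁ m₁'
  have k₁' := Γ.conj_pow_mul_mem_map φ h₁' m₁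
  have k₂ := Γ.conj_pow_mul_mem_map φ h₂ m₂'
  have k₂' := Γ.conj_pow_mul_mem_map φ h₂' m₂
  rw [hT] at k₁ k₂
  rw [hT', mul_comm] at k₁' k₂'
  exact eq_top_of_conj_mem_of_coprime hgcd k₁ k₁' k₂ k₂'

/-- If `Γ ≤ SL(2,ℤ)` has finite index and contains `C₁T^{m₁}C₁⁻¹`, `C₁T'^{m₁'}C₁⁻¹`,
`C₂T^{m₂}C₂⁻¹`, `C₂T'^{m₂'}C₂⁻¹` with `gcd(m₁m₁', m₂m₂') = 1`, then `Γ` surjects onto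
`SL(2,ℤ/nℤ)` for all `n ≥ 1`, i.e. `Γ` is a totally non congruence group. -/
theorem totally_noncongruence_of_gcd_one
    (Γ : Subgroup (Matrix.SpecialLinearGroup (Fin 2) ℤ)) (hΓ : Γ.FiniteIndex)
    (C₁ C₂ : Matrix.SpecialLinearGroup (Fin 2) ℤ) (m₁ m₁' m₂ m₂' : ℕ)
    (h₁ : C₁ * Tmat ^ m₁ * C₁⁻¹ ∈ Γ) (h₁' : C₁ * Tmat' ^ m₁' * C₁⁻¹ ∈ Γ)
    (h₂ : C₂ * Tmat ^ m₂ * C₂⁻¹ ∈ Γ) (h₂' : C₂ * Tmat' ^ m₂' * C₂⁻¹ ∈ Γ)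
    (hgcd : Nat.gcd (m₁ * m₁') (m₂ * m₂') = 1) :
    ∀ n : ℕ, 1 ≤ n →
      Subgroup.map (Matrix.SpecialLinearGroup.map (Int.castRingHom (ZMod n))) Γ = ⊤ :=
  totally_noncongruence_of_gcd_one_general Γ C₁ C₂ m₁ m₁' m₂ m₂' h₁ h₁' h₂ h₂' hgcd
end

section
/- Let α₁, …, α_p be positive even integers and α_{p+1}, …, α_{p+2q} be positive odd integers (q ≥ 0, and p ≥ 1 if q = 0), and let l ≥ 1. With σ_b the product of shifted block permutations described in the context, every length occurring in the cycle type of σ_b equals 3 or 5; equivalently, every cycle of σ_b has length 1, 3, or 5. -/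
namespace Origami

/-- The element of `Fin L` (for `L > 0`) corresponding to the natural number `a`
(which in our uses is always `< L`). -/
def mkFin (L : ℕ) (hL : 0 < L) (a : ℕ) : Fin L := ⟨a % L, Nat.mod_lt a hL⟩

/-- The 3-cycle `(a b c)` on `Fin L` (apply the right factor first). -/
def tcyc (L : ℕ) (hL : 0 < L) (a b c : ℕ) : Equiv.Perm (Fin L) :=
  Equiv.swap (mkFin L hL a) (mkFin L hL b) * Equiv.swap (mkFin L hL b) (mkFin L hL c)

/-- The 5-cycle `(a b c d e)` on `Fin L` (apply the right factor first). -/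
def fcyc (L : ℕ) (hL : 0 < L) (a b c d e : ℕ) : Equiv.Perm (Fin L) :=
  Equiv.swap (mkFin L hL a) (mkFin L hL b) * Equiv.swap (mkFin L hL b) (mkFin L hL c) *
    Equiv.swap (mkFin L hL c) (mkFin L hL d) * Equiv.swap (mkFin L hL d) (mkFin L hL e)

/-- The block permutation for an even `α = 2k`, starting at offset `S`:
the product of the 3-cycles `(S+3i, S+3i+1, S+3i+2)` for `i < k`. -/
def evenBlock (L : ℕ) (hL : 0 < L) (S k : ℕ) : Equiv.Perm (Fin L) :=
  ((List.range k).map (fun i => tcyc L hL (S + 3 * i) (S + 3 * i + 1) (S + 3 * i + 2))).prod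

/-- The block permutation for a pair of odds `α = 2k₁+1`, `α' = 2k₂+1`, starting at
offset `S`: the 3-cycles `(S+3i, S+3i+1, S+3i+2)` for `i < k₁`, the 5-cycle
`(S+3k₁, S+3k₁+4, S+3k₁+1, S+3k₁+2, S+3k₁+3)`, and the 3-cycles
`(S+3k₁+5+3j, S+3k₁+6+3j, S+3k₁+7+3j)` for `j < k₂`. -/
def oddBlock (L : ℕ) (hL : 0 < L) (S k₁ k₂ : ℕ) : Equiv.Perm (Fin L) :=
  evenBlock L hL S k₁ *
    fcyc L hL (S + 3 * k₁) (S + 3 * k₁ + 4) (S + 3 * k₁ + 1) (S + 3 * k₁ + 2) (S + 3 * k₁ + 3) *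
    evenBlock L hL (S + 3 * k₁ + 5) k₂

/-- The width of the `j`-th block (`j < p`: the even block for `αⱼ`, of width `(3/2)αⱼ + 1`,
or `(3/2)α_{p-1} + l` for the last block when `q = 0`; `p ≤ j < p+q`: the block for the pair of
odd numbers `(α_{p+2(j-p)}, α_{p+2(j-p)+1})`, of width `(3/2)(α+α') + 3`, or `(3/2)(α+α') + 2 + l`
for the last block). -/
def width (p q l : ℕ) (α : Fin (p + 2 * q) → ℕ) (j : ℕ) : ℕ :=
  if hj : j < p then
    3 * (α ⟨j, by omega⟩ / 2) + (if q = 0 ∧ j = p - 1 then l else 1)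
  else if hj' : j < p + q then
    3 * (α ⟨p + 2 * (j - p), by omega⟩ / 2) + 3 * (α ⟨p + 2 * (j - p) + 1, by omega⟩ / 2) +
      (if j = p + q - 1 then 5 + l else 6)
  else 0

/-- The shift (start offset) of the `j`-th block: the total width of the preceding blocks. -/
def shift (p q l : ℕ) (α : Fin (p + 2 * q) → ℕ) (j : ℕ) : ℕ :=
  ∑ i ∈ Finset.range j, width p q l α i

/-- The horizontal gluing permutation `σ_b` of the one-cylinder origami in the stratum
`H(α₁, …, α_{p+2q})`: the product of the shifted block permutations of the even blocks for
`α₁, …, α_p` followed by the blocks for the pairs `(α_{p+1}, α_{p+2}), …`. -/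
def sigmaB (L : ℕ) (hL : 0 < L) (p q l : ℕ) (α : Fin (p + 2 * q) → ℕ) : Equiv.Perm (Fin L) :=
  ((List.range (p + q)).map (fun j =>
    if hj : j < p then
      evenBlock L hL (shift p q l α j) (α ⟨j, by omega⟩ / 2)
    else if hj' : j < p + q then
      oddBlock L hL (shift p q l α j)
        (α ⟨p + 2 * (j - p), by omega⟩ / 2) (α ⟨p + 2 * (j - p) + 1, by omega⟩ / 2)
    else 1)).prod

end Origami

/-! Each block permutation is a product of 3-cycles (and, for a pair of odd numbers, one 5-cycle)
on consecutive integers, and the `j`-th block moves only points of `[shift j, shift j + width j)`. Hence all cycles of `σ_b`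
have pairwise disjoint supports, lying in `[0, L)` because the blocks have total width exactly `L`
(this is where the parities of the `αᵢ` enter). The cycle type of a product of disjoint cycles is
the multiset of their lengths. -/

open List

open Equiv Equiv.Perm in
theorem List.cycleType_prod_map_formPerm {α : Type*} [DecidableEq α] [Fintype α]
    {cs : List (List α)} (hnd : cs.flatten.Nodup) (hlen : ∀ c ∈ cs, 2 ≤ c.length) :
    (cs.map formPerm).prod.cycleType = (cs.map length : Multiset ℕ) := by
  obtain ⟨hnd, hdisj⟩ := List.nodup_flatten.mp hnd
  rw [cycleType_eq _ rfl, List.map_map]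
  · congr 1
    refine List.map_congr_left fun c hc => ?_
    simp only [Function.comp_apply]
    rw [support_formPerm_of_nodup c (hnd c hc), List.toFinset_card_of_nodup (hnd c hc)]
    rintro x rfl
    simpa using hlen _ hc
  · simp only [List.mem_map]
    rintro _ ⟨c, hc, rfl⟩
    exact isCycle_formPerm (hnd c hc) (hlen c hc)
  · rw [List.pairwise_map]
    exact hdisj.imp_of_mem fun hc hc' h =>
      (formPerm_disjoint_iff (hnd _ hc) (hnd _ hc') (hlen _ hc) (hlen _ hc')).mpr h

theorem List.flatten_map_range_subperm_range {B : ℕ → List ℕ} {w : ℕ → ℕ} {m : ℕ}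
    (hB : ∀ j < m, B j <+~ range' (∑ i ∈ Finset.range j, w i) (w j)) :
    ((range m).map B).flatten <+~ range (∑ i ∈ Finset.range m, w i) := by
  induction m with
  | zero => simp
  | succ m ih =>
    rw [range_succ, map_append, flatten_append, Finset.sum_range_succ, range_add,
      ← range'_eq_map_range]
    simpa using (ih fun j hj => hB j (by omega)).append (hB m (by omega))

theorem Finset.sum_range_two_mul {M : Type*} [AddCommMonoid M] (f : ℕ → M) (n : ℕ) :
    ∑ i ∈ range (2 * n), f i = ∑ j ∈ range n, (f (2 * j) + f (2 * j + 1)) := by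
  induction n with
  | zero => simp
  | succ n ih => rw [Nat.mul_succ, sum_range_succ, sum_range_succ, sum_range_succ, ih, add_assoc]

namespace Origami

def evenCycles (S k : ℕ) : List (List ℕ) :=
  (range k).map fun i => [S + 3 * i, S + 3 * i + 1, S + 3 * i + 2]

def oddCycles (S k₁ k₂ : ℕ) : List (List ℕ) :=
  evenCycles S k₁ ++
    [[S + 3 * k₁, S + 3 * k₁ + 4, S + 3 * k₁ + 1, S + 3 * k₁ + 2, S + 3 * k₁ + 3]] ++
    evenCycles (S + 3 * k₁ + 5) k₂

def blockCycles (p q l : ℕ) (α : Fin (p + 2 * q) → ℕ) (j : ℕ) : List (List ℕ) :=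
  if hj : j < p then evenCycles (shift p q l α j) (α ⟨j, by omega⟩ / 2)
  else if hj' : j < p + q then
    oddCycles (shift p q l α j)
      (α ⟨p + 2 * (j - p), by omega⟩ / 2) (α ⟨p + 2 * (j - p) + 1, by omega⟩ / 2)
  else []

def sigmaBCycles (p q l : ℕ) (α : Fin (p + 2 * q) → ℕ) : List (List ℕ) :=
  ((range (p + q)).map (blockCycles p q l α)).flatten

section Permutations

variable (L : ℕ) (hL : 0 < L)

theorem evenBlock_eq_prod_formPerm (S k : ℕ) :
    evenBlock L hL S k = (((evenCycles S k).map (map (mkFin L hL))).map formPerm).prod := by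
  simp [evenBlock, evenCycles, tcyc, formPerm_cons_cons, Function.comp_def]

theorem oddBlock_eq_prod_formPerm (S k₁ k₂ : ℕ) :
    oddBlock L hL S k₁ k₂ =
      (((oddCycles S k₁ k₂).map (map (mkFin L hL))).map formPerm).prod := by
  simp only [oddBlock, oddCycles, evenBlock_eq_prod_formPerm, map_append, prod_append]
  simp [fcyc, formPerm_cons_cons, mul_assoc]

theorem sigmaB_eq_prod_formPerm (p q l : ℕ) (α : Fin (p + 2 * q) → ℕ) :
    sigmaB L hL p q l α =
      (((sigmaBCycles p q l α).map (map (mkFin L hL))).map formPerm).prod := by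
  rw [sigmaBCycles, map_flatten, map_flatten, prod_flatten, map_map, map_map, map_map, sigmaB]
  refine congrArg prod (map_congr_left fun j hj => ?_)
  rw [mem_range] at hj
  simp only [Function.comp_apply, blockCycles]
  split_ifs <;> simp [evenBlock_eq_prod_formPerm, oddBlock_eq_prod_formPerm]

end Permutations

theorem flatten_evenCycles (S k : ℕ) : (evenCycles S k).flatten = range' S (3 * k) := by
  induction k with
  | zero => simp [evenCycles]
  | succ k ih =>
    rw [Nat.mul_succ, ← range'_append_1, ← ih]
    simp [evenCycles, range_succ, range'_succ]

theorem flatten_oddCycles_perm (S k₁ k₂ : ℕ) :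
    (oddCycles S k₁ k₂).flatten ~ range' S (3 * k₁ + 5 + 3 * k₂) := by
  rw [← range'_append_1, ← range'_append_1, oddCycles]
  simp only [flatten_append, flatten_evenCycles, flatten_singleton]
  refine (Perm.append_left _ ?_).append_right _
  exact .cons _ (perm_middle (l₁ := [_, _, _]) (l₂ := [])).symm

theorem flatten_blockCycles_subperm (p q l : ℕ) (α : Fin (p + 2 * q) → ℕ) (j : ℕ) :
    (blockCycles p q l α j).flatten <+~ range' (shift p q l α j) (width p q l α j) := by
  by_cases hp : j < p
  · simp only [blockCycles, width, dif_pos hp, flatten_evenCycles]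
    exact (range'_sublist_right.mpr (by split <;> omega)).subperm
  by_cases hpq : j < p + q
  · simp only [blockCycles, width, dif_neg hp, dif_pos hpq]
    exact (flatten_oddCycles_perm _ _ _).subperm.trans
      (range'_sublist_right.mpr (by split <;> omega)).subperm
  · simp [blockCycles, hp, hpq]

theorem flatten_sigmaBCycles_subperm (p q l : ℕ) (α : Fin (p + 2 * q) → ℕ) :
    (sigmaBCycles p q l α).flatten <+~ range (shift p q l α (p + q)) := by
  rw [sigmaBCycles, flatten_flatten, map_map]
  exact flatten_map_range_subperm_range fun j _ => flatten_blockCycles_subperm p q l α j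

theorem length_of_mem_evenCycles {S k : ℕ} {c : List ℕ} (hc : c ∈ evenCycles S k) :
    c.length = 3 := by
  obtain ⟨i, -, rfl⟩ := mem_map.mp hc
  rfl

theorem length_of_mem_sigmaBCycles {p q l : ℕ} {α : Fin (p + 2 * q) → ℕ} {c : List ℕ}
    (hc : c ∈ sigmaBCycles p q l α) : c.length = 3 ∨ c.length = 5 := by
  obtain ⟨_, hB, hc⟩ := mem_flatten.mp hc
  obtain ⟨j, -, rfl⟩ := mem_map.mp hB
  unfold blockCycles at hc
  split_ifs at hc
  · exact .inl (length_of_mem_evenCycles hc)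
  · simp only [oddCycles, mem_append, mem_singleton] at hc
    rcases hc with (hc | rfl) | hc
    · exact .inl (length_of_mem_evenCycles hc)
    · exact .inr rfl
    · exact .inl (length_of_mem_evenCycles hc)
  · simp at hc

theorem width_eq_width_one_add {p q l : ℕ} (hl : 1 ≤ l) (α : Fin (p + 2 * q) → ℕ) {j : ℕ}
    (hj : j < p + q) :
    width p q l α j = width p q 1 α j + if j = p + q - 1 then l - 1 else 0 := by
  unfold width
  split_ifs <;> omega

theorem shift_eq_shift_one_add {p q l : ℕ} (hl : 1 ≤ l) (hpq : q = 0 → 1 ≤ p)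
    (α : Fin (p + 2 * q) → ℕ) :
    shift p q l α (p + q) = shift p q 1 α (p + q) + (l - 1) := by
  unfold shift
  rw [Finset.sum_congr rfl fun j hj => width_eq_width_one_add hl α (Finset.mem_range.mp hj),
    Finset.sum_add_distrib, Finset.sum_ite_eq', if_pos (by simp; omega)]

theorem two_mul_shift_one {p q : ℕ} (α : Fin (p + 2 * q) → ℕ)
    (hEven : ∀ i : Fin (p + 2 * q), (i : ℕ) < p → Even (α i))
    (hOdd : ∀ i : Fin (p + 2 * q), p ≤ (i : ℕ) → Odd (α i)) :
    2 * shift p q 1 α (p + q) = 3 * ∑ i, α i + 2 * (p + 3 * q) := by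
  set a := Function.extend Fin.val α 0
  have ha (i : ℕ) (h : i < p + 2 * q) : α ⟨i, h⟩ = a i :=
    (Fin.val_injective.extend_apply α 0 ⟨i, h⟩).symm
  have hsum : ∑ i, α i =
      ∑ i ∈ Finset.range p, a i + ∑ j ∈ Finset.range q, (a (p + 2 * j) + a (p + 2 * j + 1)) := by
    calc ∑ i, α i = ∑ i ∈ Finset.range (p + 2 * q), a i := by
          rw [← Fin.sum_univ_eq_sum_range]
          exact Finset.sum_congr rfl fun i _ => ha i i.2
      _ = _ := by rw [Finset.sum_range_add, Finset.sum_range_two_mul]; rfl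
  have heven : ∀ j ∈ Finset.range p, 2 * width p q 1 α j = 3 * a j + 2 := by
    intro j hj
    rw [Finset.mem_range] at hj
    have := Nat.even_iff.mp (hEven ⟨j, by omega⟩ hj)
    simp only [width, dif_pos hj, ite_self, ha] at this ⊢
    omega
  have hodd : ∀ j ∈ Finset.range q,
      2 * width p q 1 α (p + j) = 3 * (a (p + 2 * j) + a (p + 2 * j + 1)) + 6 := by
    intro j hj
    rw [Finset.mem_range] at hj
    have h₁ := Nat.odd_iff.mp (hOdd ⟨p + 2 * j, by omega⟩ (by simp))
    have h₂ := Nat.odd_iff.mp (hOdd ⟨p + 2 * j + 1, by omega⟩ (by simp; omega))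
    simp only [width, dif_neg (show ¬p + j < p by omega), dif_pos (show p + j < p + q by omega),
      Nat.add_sub_cancel_left, ha] at h₁ h₂ ⊢
    split <;> omega
  rw [shift, Finset.sum_range_add, mul_add, Finset.mul_sum, Finset.mul_sum,
    Finset.sum_congr rfl heven, Finset.sum_congr rfl hodd, hsum]
  simp only [mul_add, Finset.sum_add_distrib, Finset.mul_sum, Finset.sum_const, Finset.card_range,
    smul_eq_mul]
  ring

theorem shift_p_add_q_eq {p q l : ℕ} (hl : 1 ≤ l) (hpq : q = 0 → 1 ≤ p) (α : Fin (p + 2 * q) → ℕ)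
    (hEven : ∀ i : Fin (p + 2 * q), (i : ℕ) < p → Even (α i))
    (hOdd : ∀ i : Fin (p + 2 * q), p ≤ (i : ℕ) → Odd (α i)) :
    shift p q l α (p + q) = 3 * (∑ i, α i) / 2 + p + 3 * q + l - 1 := by
  have := two_mul_shift_one α hEven hOdd
  rw [shift_eq_shift_one_add hl hpq]
  omega

theorem nodup_map_mkFin {L : ℕ} (hL : 0 < L) {s : List ℕ} (hs : s <+~ range L) :
    (s.map (mkFin L hL)).Nodup := by
  obtain ⟨s', hs', hsub⟩ := hs
  refine (hs'.nodup_iff.mp (nodup_range.sublist hsub)).map_on fun a ha b hb hab => ?_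
  have ha := mem_range.mp (hsub.subset (hs'.mem_iff.mpr ha))
  have hb := mem_range.mp (hsub.subset (hs'.mem_iff.mpr hb))
  simpa [mkFin, Nat.mod_eq_of_lt ha, Nat.mod_eq_of_lt hb] using hab

theorem cycleType_sigmaB {L : ℕ} (hL : 0 < L) {p q l : ℕ} {α : Fin (p + 2 * q) → ℕ}
    (hshift : shift p q l α (p + q) ≤ L) :
    (sigmaB L hL p q l α).cycleType = ((sigmaBCycles p q l α).map length : Multiset ℕ) := by
  have hnodup : ((sigmaBCycles p q l α).map (map (mkFin L hL))).flatten.Nodup := by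
    rw [← map_flatten]
    exact nodup_map_mkFin hL <|
      (flatten_sigmaBCycles_subperm p q l α).trans (range_sublist.mpr hshift).subperm
  have htwo : ∀ c ∈ (sigmaBCycles p q l α).map (map (mkFin L hL)), 2 ≤ c.length := by
    simp only [mem_map, forall_exists_index, and_imp]
    rintro _ c hc rfl
    rcases length_of_mem_sigmaBCycles hc with h | h <;> simp [h]
  rw [sigmaB_eq_prod_formPerm, cycleType_prod_map_formPerm hnodup htwo, map_map]
  simp [Function.comp_def]

end Origami

/-- **Lemma.** Let `α₁, …, α_p` be positive even and `α_{p+1}, …, α_{p+2q}` positive odd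
numbers (`p ≥ 1` if `q = 0`), `l ≥ 1`, and `L = (3/2)(α₁+⋯+α_{p+2q}) + p + 3q + l - 1`.
Every length occurring in the cycle type of the product `σ_b` of the shifted block
permutations equals `3` or `5` (i.e. every cycle of `σ_b` has length `1`, `3` or `5`). -/
theorem sigmaB_cycle_lengths (p q l : ℕ) (hl : 1 ≤ l) (hpq : q = 0 → 1 ≤ p)
    (α : Fin (p + 2 * q) → ℕ)
    (hEven : ∀ i : Fin (p + 2 * q), (i : ℕ) < p → Even (α i) ∧ 0 < α i)
    (hOdd : ∀ i : Fin (p + 2 * q), p ≤ (i : ℕ) → Odd (α i) ∧ 0 < α i)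
    (L : ℕ) (hLdef : L = 3 * (∑ i, α i) / 2 + p + 3 * q + l - 1) (hL : 0 < L) :
    ∀ c ∈ (Origami.sigmaB L hL p q l α).cycleType, c = 3 ∨ c = 5 := by
  have hshift : Origami.shift p q l α (p + q) = L := by
    rw [hLdef]
    exact Origami.shift_p_add_q_eq hl hpq α (fun i hi => (hEven i hi).1) fun i hi => (hOdd i hi).1
  rw [Origami.cycleType_sigmaB hL hshift.le]
  simpa using fun c hc => Origami.length_of_mem_sigmaBCycles hc
end
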